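/- arXiv:1604.08510 — 3 statements merged into one kernel-verified Lean document; each statement's English description precedes it below -/
import Mathlib

section
/- Let $n$ be a nonzero integer and let $p$ be an odd prime not dividing $n$. Then $\sigma_p = 1 - \tfrac{3}{2}p^{-2} + \tfrac{1}{2}p^{-3}$, i.e. the Haar probability measure of the set of triples $(a,b,c) \in \mathbb{Z}_p^3$ for which $a x^2 + b y^2 + c z^2 = n$ has a solution in $\mathbb{Z}_p^3$ equals $1 - \tfrac{3}{2}p^{-2} + \tfrac{1}{2}p^{-3}$. -/
open MeasureTheory TopologicalSpace Filter

noncomputable section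

instance padicMS (p : ℕ) [Fact p.Prime] : MeasurableSpace (ℤ_[p] × ℤ_[p] × ℤ_[p]) := borel _
instance padicBS (p : ℕ) [Fact p.Prime] : BorelSpace (ℤ_[p] × ℤ_[p] × ℤ_[p]) := ⟨rfl⟩

/-- The Haar probability measure on `ℤ_p × ℤ_p × ℤ_p`, normalised so that the
total space has measure `1`. -/
def padicHaar (p : ℕ) [Fact p.Prime] : Measure (ℤ_[p] × ℤ_[p] × ℤ_[p]) :=
  Measure.addHaarMeasure ⊤

/-- `Ω_p`: the set of triples `(a,b,c) ∈ ℤ_p³` such that `a x² + b y² + c z² = n`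
has a solution `(x,y,z) ∈ ℤ_p³`. -/
def Omega (p : ℕ) [Fact p.Prime] (n : ℤ) : Set (ℤ_[p] × ℤ_[p] × ℤ_[p]) :=
  {t | ∃ x y z : ℤ_[p], t.1 * x ^ 2 + t.2.1 * y ^ 2 + t.2.2 * z ^ 2 = (n : ℤ_[p])}

/-!
Since `p` is odd and `p ∤ n`, a solution of the reduced equation modulo `p` has a term `a x²`
that is a unit, and Hensel's lemma lifts it in that variable. Hence `Ω_p` is the preimage under
reduction of the set of triples over `𝔽_p` for which the reduced equation is solvable. The fibres
of reduction are translates of its open kernel, so each has Haar measure `p⁻³`. Over `𝔽_p` two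
nonzero coefficients already represent every element, so the only triples without a solution are
`0` and those with a single nonzero coefficient `a` for which `n / a` is a non-square:
`1 + 3 (p - 1) / 2` triples in all.
-/

open Finset Polynomial
open scoped ENNReal

theorem AddMonoidHom.measure_preimage_finset {G H : Type*} [AddGroup G] [MeasurableSpace G]
    [MeasurableAdd G] (μ : Measure G) [IsProbabilityMeasure μ] [μ.IsAddLeftInvariant]
    [AddGroup H] [Fintype H] (f : G →+ H) (hf : Function.Surjective f)
    (hker : MeasurableSet (f.ker : Set G)) (S : Finset H) :
    μ (f ⁻¹' S) = #S / Fintype.card H := by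
  have hfiber (h : H) : ∃ g, f ⁻¹' {h} = (fun x => -g + x) ⁻¹' f.ker := by
    obtain ⟨g, rfl⟩ := hf h
    exact ⟨g, Set.ext fun x => by simp [neg_add_eq_zero, eq_comm (a := f x)]⟩
  have hindex : f.ker.index = Fintype.card H := by
    rw [AddSubgroup.index_ker, f.range_eq_top_of_surjective hf, AddSubgroup.card_top,
      Nat.card_eq_fintype_card]
  have : f.ker.FiniteIndex := ⟨by simp [hindex]⟩
  have hμker : μ f.ker = (Fintype.card H : ℝ≥0∞)⁻¹ := by
    refine ENNReal.eq_inv_of_mul_eq_one_left ?_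
    rw [mul_comm, ← hindex, f.ker.index_mul_measure hker μ, measure_univ]
  have hμ (h : H) : μ (f ⁻¹' {h}) = μ f.ker := by
    obtain ⟨g, hg⟩ := hfiber h
    rw [hg, measure_preimage_add]
  rw [← sum_measure_preimage_singleton S fun h _ => by
      obtain ⟨g, hg⟩ := hfiber h
      exact hg ▸ hker.preimage (measurable_const_add _),
    sum_congr rfl fun h _ => hμ h, sum_const, nsmul_eq_mul, hμker, ENNReal.div_eq_inv_mul,
    mul_comm]

namespace FiniteField

variable {F : Type*} [Field F] [Fintype F]

theorem exists_mul_sq_add_mul_sq_eq (hF : ringChar F ≠ 2) {a b : F} (ha : a ≠ 0) (hb : b ≠ 0)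
    (c : F) : ∃ x y : F, a * x ^ 2 + b * y ^ 2 = c := by
  have hf : degree (C a * X ^ 2) = 2 := degree_C_mul_X_pow 2 ha
  have hg : degree (C b * X ^ 2 - C c) = 2 := by
    rw [degree_sub_eq_left_of_degree_lt] <;> rw [degree_C_mul_X_pow 2 hb]
    · rfl
    · exact degree_C_le.trans_lt (by decide)
  obtain ⟨x, y, hxy⟩ := exists_root_sum_quadratic hf hg (odd_card_of_char_ne_two hF)
  exact ⟨x, y, by simpa [sub_eq_zero, ← add_sub_assoc] using hxy⟩

variable [DecidableEq F]

theorem exists_mul_sq_eq_iff_quadraticChar {a m : F} (hm : m ≠ 0) :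
    (∃ x, a * x ^ 2 = m) ↔ quadraticChar F (a * m) = 1 := by
  rcases eq_or_ne a 0 with rfl | ha
  · simp [hm.symm]
  rw [quadraticChar_one_iff_isSquare (mul_ne_zero ha hm)]
  constructor
  · rintro ⟨x, rfl⟩
    exact ⟨a * x, by ring⟩
  · rintro ⟨s, hs⟩
    exact ⟨s / a, by field_simp; linear_combination -hs⟩

theorem two_mul_card_quadraticChar_eq_one_add_one (hF : ringChar F ≠ 2) :
    2 * #{a : F | quadraticChar F a = 1} + 1 = Fintype.card F := by
  obtain ⟨g, hg⟩ := quadraticChar_exists_neg_one hF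
  have hg0 : g ≠ 0 := fun h => by simp [h] at hg
  have hswap (a : F) : quadraticChar F (g * a) = -quadraticChar F a := by
    rw [map_mul, hg, neg_one_mul]
  have hle {s t : ℤ} (hst : s = -t) :
      #{a : F | quadraticChar F a = s} ≤ #{a : F | quadraticChar F a = t} :=
    card_le_card_of_injOn (g * ·) (fun a ha => by simp_all) (mul_right_injective₀ hg0).injOn
  have hne : filter (fun a => quadraticChar F a ≠ 1) univ =
      insert 0 (filter (fun a => quadraticChar F a = -1) univ) := by
    ext a
    rcases eq_or_ne a 0 with rfl | ha
    · simp
    · simp only [mem_filter, mem_univ, true_and, mem_insert, ha, false_or,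
        quadraticChar_eq_neg_one_iff_not_one ha]
  have hsplit : #{a : F | quadraticChar F a = 1} + #{a : F | quadraticChar F a = -1} + 1 =
      Fintype.card F := by
    rw [add_assoc, ← card_insert_of_notMem (a := 0) (by simp), ← hne,
      card_filter_add_card_filter_not, card_univ]
  have := le_antisymm (hle (s := 1) (t := -1) (by norm_num)) (hle (by norm_num))
  omega

theorem two_mul_card_not_exists_mul_sq_eq (hF : ringChar F ≠ 2) {m : F} (hm : m ≠ 0) :
    2 * #{a : F | ¬∃ x, a * x ^ 2 = m} = Fintype.card F + 1 := by
  have hrep : #{a : F | ∃ x, a * x ^ 2 = m} = #{b : F | quadraticChar F b = 1} :=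
    card_equiv (Equiv.mulRight₀ m hm) fun a => by simp [exists_mul_sq_eq_iff_quadraticChar hm]
  have hsplit := card_filter_add_card_filter_not (s := univ) fun a : F => ∃ x, a * x ^ 2 = m
  have hsq := two_mul_card_quadraticChar_eq_one_add_one hF
  rw [card_univ] at hsplit
  omega

theorem not_exists_diag_ternary_iff (hF : ringChar F ≠ 2) {a b c m : F} :
    (¬∃ x y z, a * x ^ 2 + b * y ^ 2 + c * z ^ 2 = m) ↔
      (¬∃ x, a * x ^ 2 = m) ∧ b = 0 ∧ c = 0 ∨ a = 0 ∧ (¬∃ y, b * y ^ 2 = m) ∧ c = 0 ∨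
        a = 0 ∧ b = 0 ∧ ¬∃ z, c * z ^ 2 = m := by
  constructor
  · intro h
    have hab : a = 0 ∨ b = 0 := by
      by_contra! ⟨ha, hb⟩
      obtain ⟨x, y, hxy⟩ := exists_mul_sq_add_mul_sq_eq hF ha hb m
      exact h ⟨x, y, 0, by simpa using hxy⟩
    have hac : a = 0 ∨ c = 0 := by
      by_contra! ⟨ha, hc⟩
      obtain ⟨x, z, hxz⟩ := exists_mul_sq_add_mul_sq_eq hF ha hc m
      exact h ⟨x, 0, z, by simpa using hxz⟩
    have hbc : b = 0 ∨ c = 0 := by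
      by_contra! ⟨hb, hc⟩
      obtain ⟨y, z, hyz⟩ := exists_mul_sq_add_mul_sq_eq hF hb hc m
      exact h ⟨0, y, z, by simpa using hyz⟩
    rcases hab with h₁ | h₁ <;> rcases hac with h₂ | h₂ <;> rcases hbc with h₃ | h₃ <;> simp_all
  · rintro (⟨h, rfl, rfl⟩ | ⟨rfl, h, rfl⟩ | ⟨rfl, rfl, h⟩) ⟨x, y, z, hxyz⟩ <;> simp_all

theorem card_not_exists_diag_ternary_add_two (hF : ringChar F ≠ 2) {m : F} (hm : m ≠ 0) :
    #{t : F × F × F | ¬∃ x y z, t.1 * x ^ 2 + t.2.1 * y ^ 2 + t.2.2 * z ^ 2 = m} + 2 =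
      3 * #{a : F | ¬∃ x, a * x ^ 2 = m} := by
  set B : Finset F := {a | ¬∃ x, a * x ^ 2 = m}
  set S₁ : Finset (F × F × F) := B ×ˢ {0} ×ˢ {0}
  set S₂ : Finset (F × F × F) := {0} ×ˢ B ×ˢ {0}
  set S₃ : Finset (F × F × F) := {0} ×ˢ {0} ×ˢ B
  have hbad : filter (fun t : F × F × F =>
      ¬∃ x y z, t.1 * x ^ 2 + t.2.1 * y ^ 2 + t.2.2 * z ^ 2 = m) univ = S₁ ∪ S₂ ∪ S₃ := by
    ext ⟨a, b, c⟩
    simp [not_exists_diag_ternary_iff hF, S₁, S₂, S₃, B, eq_comm (a := (0 : F))]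
    tauto
  have h₁₂ : S₁ ∩ S₂ = {0} := by
    ext ⟨a, b, c⟩
    simp [S₁, S₂]
    aesop
  have h₁₂₃ : (S₁ ∪ S₂) ∩ S₃ = {0} := by
    ext ⟨a, b, c⟩
    simp [S₁, S₂, S₃]
    aesop
  have h₁ := card_union_add_card_inter S₁ S₂
  have h₂ := card_union_add_card_inter (S₁ ∪ S₂) S₃
  rw [h₁₂, card_singleton] at h₁
  rw [h₁₂₃, card_singleton] at h₂
  have hS₁ : #S₁ = #B := by simp [S₁]
  have hS₂ : #S₂ = #B := by simp [S₂]
  have hS₃ : #S₃ = #B := by simp [S₃]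
  rw [hbad]
  omega

theorem two_mul_card_exists_diag_ternary (hF : ringChar F ≠ 2) {m : F} (hm : m ≠ 0) :
    2 * #{t : F × F × F | ∃ x y z, t.1 * x ^ 2 + t.2.1 * y ^ 2 + t.2.2 * z ^ 2 = m} +
      3 * Fintype.card F = 2 * Fintype.card F ^ 3 + 1 := by
  have hsplit := card_filter_add_card_filter_not (s := univ)
    fun t : F × F × F => ∃ x y z, t.1 * x ^ 2 + t.2.1 * y ^ 2 + t.2.2 * z ^ 2 = m
  rw [card_univ, Fintype.card_prod, Fintype.card_prod] at hsplit
  have hbad := card_not_exists_diag_ternary_add_two hF hm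
  have hB := two_mul_card_not_exists_mul_sq_eq hF hm
  linarith

end FiniteField

namespace PadicInt

variable {p : ℕ} [Fact p.Prime]

theorem toZMod_eq_zero_iff (x : ℤ_[p]) : toZMod x = 0 ↔ ‖x‖ < 1 := by
  rw [← RingHom.mem_ker, ker_toZMod, IsLocalRing.mem_maximalIdeal, mem_nonunits]

theorem norm_eq_one_of_toZMod_ne_zero {x : ℤ_[p]} (hx : toZMod x ≠ 0) : ‖x‖ = 1 :=
  (norm_le_one x).eq_of_not_lt (mt (toZMod_eq_zero_iff x).mpr hx)

theorem exists_mul_sq_eq_of_toZMod (hp2 : p ≠ 2) {u v x₀ : ℤ_[p]} (hu : toZMod u ≠ 0)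
    (hx₀ : toZMod x₀ ≠ 0) (h : toZMod (u * x₀ ^ 2) = toZMod v) : ∃ x, u * x ^ 2 = v := by
  set F : ℤ_[p][X] := C u * X ^ 2 - C v
  have hF' : ‖F.derivative.aeval x₀‖ = 1 := by
    have hder : F.derivative.aeval x₀ = 2 * u * x₀ := by simp [F]; ring
    have h2 : (2 : ZMod p) ≠ 0 := Ring.two_ne_zero (by rwa [ZMod.ringChar_zmod_n])
    apply norm_eq_one_of_toZMod_ne_zero
    rw [hder, map_mul, map_mul, map_ofNat]
    exact mul_ne_zero (mul_ne_zero h2 hu) hx₀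
  have hF : ‖F.aeval x₀‖ < ‖F.derivative.aeval x₀‖ ^ 2 := by
    rw [hF', one_pow, ← toZMod_eq_zero_iff]
    simp [F, h]
  obtain ⟨x, hx, -⟩ := hensels_lemma hF
  exact ⟨x, sub_eq_zero.mp (by simpa [F] using hx)⟩

theorem exists_diag_ternary_of_toZMod (hp2 : p ≠ 2) {a b c v : ℤ_[p]} {x y z : ZMod p}
    (h : toZMod a * x ^ 2 + toZMod b * y ^ 2 + toZMod c * z ^ 2 = toZMod v)
    (hx : toZMod a * x ^ 2 ≠ 0) : ∃ X Y Z, a * X ^ 2 + b * Y ^ 2 + c * Z ^ 2 = v := by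
  obtain ⟨X₀, rfl⟩ := ZMod.ringHom_surjective toZMod x
  obtain ⟨Y, rfl⟩ := ZMod.ringHom_surjective toZMod y
  obtain ⟨Z, rfl⟩ := ZMod.ringHom_surjective toZMod z
  obtain ⟨X, hX⟩ := exists_mul_sq_eq_of_toZMod hp2 (v := v - b * Y ^ 2 - c * Z ^ 2)
    (left_ne_zero_of_mul hx) (pow_ne_zero_iff two_ne_zero |>.mp (right_ne_zero_of_mul hx))
    (by simp only [map_sub, map_mul, map_pow]; linear_combination h)
  exact ⟨X, Y, Z, by linear_combination hX⟩

def toZModTriple (p : ℕ) [Fact p.Prime] : ℤ_[p] × ℤ_[p] × ℤ_[p] →+* ZMod p × ZMod p × ZMod p :=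
  toZMod.prodMap (toZMod.prodMap toZMod)

theorem toZModTriple_surjective : Function.Surjective (toZModTriple p) :=
  (ZMod.ringHom_surjective toZMod).prodMap
    ((ZMod.ringHom_surjective toZMod).prodMap (ZMod.ringHom_surjective toZMod))

theorem isOpen_ker_toZModTriple :
    IsOpen ((toZModTriple p).toAddMonoidHom.ker : Set (ℤ_[p] × ℤ_[p] × ℤ_[p])) := by
  let 𝔪 : Set ℤ_[p] := IsLocalRing.maximalIdeal ℤ_[p]
  have h𝔪 : IsOpen 𝔪 := IsLocalRing.isOpen_maximalIdeal ℤ_[p]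
  have hker : ((toZModTriple p).toAddMonoidHom.ker : Set (ℤ_[p] × ℤ_[p] × ℤ_[p])) =
      𝔪 ×ˢ 𝔪 ×ˢ 𝔪 := by
    ext t
    simp [𝔪, toZModTriple, ← ker_toZMod, Prod.ext_iff]
  exact hker ▸ h𝔪.prod (h𝔪.prod h𝔪)

end PadicInt

section Density

open PadicInt

variable {p : ℕ} [Fact p.Prime]

instance : (padicHaar p).IsAddLeftInvariant :=
  Measure.isAddLeftInvariant_addHaarMeasure ⊤

instance : IsProbabilityMeasure (padicHaar p) :=
  ⟨by simpa [padicHaar] using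
    Measure.addHaarMeasure_self (K₀ := (⊤ : PositiveCompacts (ℤ_[p] × ℤ_[p] × ℤ_[p])))⟩

theorem padicHaar_preimage_toZModTriple (S : Finset (ZMod p × ZMod p × ZMod p)) :
    padicHaar p (toZModTriple p ⁻¹' S) = #S / (p : ℝ≥0∞) ^ 3 := by
  simpa [pow_three] using (toZModTriple p).toAddMonoidHom.measure_preimage_finset (padicHaar p)
    toZModTriple_surjective isOpen_ker_toZModTriple.measurableSet S

theorem omega_eq_preimage_toZModTriple (hp2 : p ≠ 2) {n : ℤ} (hn : (n : ZMod p) ≠ 0) :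
    Omega p n = toZModTriple p ⁻¹'
      ↑({s | ∃ x y z, s.1 * x ^ 2 + s.2.1 * y ^ 2 + s.2.2 * z ^ 2 = (n : ZMod p)} :
        Finset (ZMod p × ZMod p × ZMod p)) := by
  ext ⟨a, b, c⟩
  simp only [Omega, toZModTriple, Set.mem_ofPred_eq, Set.mem_preimage, coe_filter, mem_univ,
    true_and, RingHom.coe_prodMap, Prod.map_apply]
  constructor
  · rintro ⟨x, y, z, h⟩
    exact ⟨toZMod x, toZMod y, toZMod z, by simpa using congrArg toZMod h⟩
  rintro ⟨x, y, z, h⟩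
  rw [← map_intCast toZMod] at h hn
  by_cases h₁ : toZMod a * x ^ 2 = 0
  · by_cases h₂ : toZMod b * y ^ 2 = 0
    · have h₃ : toZMod c * z ^ 2 ≠ 0 := fun h₃ => hn (by rw [← h, h₁, h₂, h₃]; ring)
      obtain ⟨Z, X, Y, hZ⟩ := exists_diag_ternary_of_toZMod hp2 (a := c) (b := a) (c := b)
        (v := n) (x := z) (y := x) (z := y) (by linear_combination h) h₃
      exact ⟨X, Y, Z, by linear_combination hZ⟩
    · obtain ⟨Y, X, Z, hY⟩ := exists_diag_ternary_of_toZMod hp2 (a := b) (b := a) (c := c)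
        (v := n) (x := y) (y := x) (z := z) (by linear_combination h) h₂
      exact ⟨X, Y, Z, by linear_combination hY⟩
  · exact exists_diag_ternary_of_toZMod hp2 h h₁

end Density

theorem stmt1_general (n : ℤ) (p : ℕ) [Fact p.Prime] (hp2 : p ≠ 2)
    (hpn : ¬ (p : ℤ) ∣ n) :
    (padicHaar p (Omega p n)).toReal = 1 - 3 / (2 * (p : ℝ) ^ 2) + 1 / (2 * (p : ℝ) ^ 3) := by
  have hn : (n : ZMod p) ≠ 0 := by rwa [Ne, ZMod.intCast_zmod_eq_zero_iff_dvd]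
  have hcount := FiniteField.two_mul_card_exists_diag_ternary
    (by rwa [ZMod.ringChar_zmod_n] : ringChar (ZMod p) ≠ 2) hn
  rw [ZMod.card] at hcount
  rify at hcount
  have hp : (p : ℝ) ≠ 0 := by exact_mod_cast (Fact.out : p.Prime).ne_zero
  rw [omega_eq_preimage_toZModTriple hp2 hn, padicHaar_preimage_toZModTriple, ENNReal.toReal_div,
    ENNReal.toReal_natCast, ENNReal.toReal_pow, ENNReal.toReal_natCast]
  field_simp
  linear_combination hcount

/-- For an odd prime `p` not dividing `n ≠ 0`, the local density
`σ_p = μ_p(Ω_p)` equals `1 - (3/2)p⁻² + (1/2)p⁻³`. -/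
theorem stmt1 (n : ℤ) (hn : n ≠ 0) (p : ℕ) [Fact p.Prime] (hp2 : p ≠ 2)
    (hpn : ¬ (p : ℤ) ∣ n) :
    (padicHaar p (Omega p n)).toReal = 1 - 3 / (2 * (p : ℝ) ^ 2) + 1 / (2 * (p : ℝ) ^ 3) :=
  stmt1_general n p hp2 hpn
end
end

section
/- Let $n$ be an odd integer (in particular $n \ne 0$). Then $\sigma_2 = 357/512$, i.e. the Haar probability measure of the set of triples $(a,b,c) \in \mathbb{Z}_2^3$ for which $a x^2 + b y^2 + c z^2 = n$ has a solution in $\mathbb{Z}_2^3$ equals $357/512$. -/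
open MeasureTheory TopologicalSpace Filter

noncomputable section

/-!
Every square in `ℤ₂` is `0`, `1` or `4` modulo `8`, so `b y²` reduces modulo `8` into
`{0, b, 4b}`, and each of these residues is attained (by `y = 0, 1, 2`). Conversely, if such
residues of the three terms add up to the odd number `n`, one of them is odd; it then equals the
residue of its coefficient `a`, which is therefore a unit, and after fixing the other two terms
the equation `a x² = r` with `r ≡ a (mod 8)` is solved by Hensel's lemma, units `≡ 1 (mod 8)`
being squares in `ℤ₂`. Hence `Ω₂` is the preimage of a set of `357` residue triples under
reduction `ℤ₂³ → (ℤ/8)³`, each of whose `512` fibres is a coset of the kernel and so has Haar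
measure `1/512`.
-/

open Finset in
theorem AddMonoidHom.card_mul_measure_preimage {A G : Type*} [AddGroup A] [MeasurableSpace A]
    [MeasurableAdd A] [AddGroup G] [Finite G] (μ : Measure A) [μ.IsAddLeftInvariant]
    (φ : A →+ G) (hφ : Function.Surjective φ) (hker : MeasurableSet (φ.ker : Set A))
    (S : Finset G) : Nat.card G * μ (φ ⁻¹' S) = #S * μ Set.univ := by
  have hfiber (a : A) : φ ⁻¹' {φ a} = (-a + ·) ⁻¹' φ.ker := by
    ext x
    simp only [Set.mem_preimage, Set.mem_singleton_iff, SetLike.mem_coe, AddMonoidHom.mem_ker,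
      map_add, map_neg, neg_add_eq_zero]
    exact eq_comm
  have hindex : φ.ker.index = Nat.card G := by
    rw [AddSubgroup.index_ker, AddMonoidHom.range_eq_top.mpr hφ, AddSubgroup.card_top]
  have : φ.ker.FiniteIndex := ⟨by rw [hindex]; exact Nat.card_pos.ne'⟩
  have hfiber_measurable (g : G) : MeasurableSet (φ ⁻¹' {g}) := by
    obtain ⟨a, rfl⟩ := hφ g
    exact hfiber a ▸ measurable_const_add (-a) hker
  have hfiber_measure (g : G) : μ (φ ⁻¹' {g}) = μ φ.ker := by
    obtain ⟨a, rfl⟩ := hφ g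
    rw [hfiber, measure_preimage_add]
  rw [← sum_measure_preimage_singleton S fun g _ ↦ hfiber_measurable g,
    ← φ.ker.index_mul_measure hker, hindex]
  simp only [hfiber_measure, sum_const, nsmul_eq_mul]
  ring

instance (p : ℕ) [Fact p.Prime] : (padicHaar p).IsAddHaarMeasure :=
  Measure.isAddHaarMeasure_addHaarMeasure _

theorem padicHaar_univ (p : ℕ) [Fact p.Prime] : padicHaar p Set.univ = 1 :=
  Measure.addHaarMeasure_self (K₀ := ⊤)

namespace PadicInt

section

variable {p : ℕ} [Fact p.Prime]

theorem isClosed_ker_toZModPow (n : ℕ) :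
    IsClosed (RingHom.ker (toZModPow n : ℤ_[p] →+* ZMod (p ^ n)) : Set ℤ_[p]) := by
  have : (RingHom.ker (toZModPow n : ℤ_[p] →+* ZMod (p ^ n)) : Set ℤ_[p]) =
      Metric.closedBall 0 ((p : ℝ) ^ (-(n : ℤ))) := by
    ext x
    rw [SetLike.mem_coe, ker_toZModPow, ← norm_le_pow_iff_mem_span_pow, mem_closedBall_zero_iff]
  exact this ▸ Metric.isClosed_closedBall

theorem isUnit_of_isUnit_toZModPow {n : ℕ} (hn : n ≠ 0) {x : ℤ_[p]}
    (h : IsUnit (toZModPow n x)) : IsUnit x := by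
  have : Nontrivial (ZMod (p ^ n)) :=
    ZMod.nontrivial_iff.mpr (Nat.one_lt_pow hn (Fact.out : p.Prime).one_lt).ne'
  have := IsLocalHom.of_surjective (toZModPow n : ℤ_[p] →+* _) (ZMod.ringHom_surjective _)
  exact h.of_map

end

open Polynomial in
theorem exists_sq_eq_of_toZModPow_three_eq_one {w : ℤ_[2]} (hw : toZModPow 3 w = 1) :
    ∃ s : ℤ_[2], s ^ 2 = w := by
  have hnorm : ‖1 - w‖ ≤ ((2 : ℕ) : ℝ) ^ (-(3 : ℕ) : ℤ) := by
    rw [norm_le_pow_iff_mem_span_pow, ← ker_toZModPow, RingHom.mem_ker, map_sub, map_one, hw,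
      sub_self]
  have h2 : ‖(2 : ℤ_[2])‖ = 2⁻¹ := by simpa using norm_p (p := 2)
  -- Newton's method for `X² - w` started at `1` converges: `‖F 1‖ ≤ 1/8 < 1/4 = ‖F' 1‖²`.
  have hF : ‖(X ^ 2 - C w).aeval (1 : ℤ_[2])‖ <
      ‖(derivative (X ^ 2 - C w)).aeval (1 : ℤ_[2])‖ ^ 2 := by
    have hF1 : (X ^ 2 - C w).aeval (1 : ℤ_[2]) = 1 - w := by simp
    have hF'1 : (derivative (X ^ 2 - C w)).aeval (1 : ℤ_[2]) = 2 := by norm_num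
    rw [hF1, hF'1, h2]
    exact hnorm.trans_lt (by norm_num)
  obtain ⟨s, hs, -⟩ := hensels_lemma hF
  exact ⟨s, by simpa [sub_eq_zero] using hs⟩

open Finset

def mulSqResidues (β : ZMod 8) : Finset (ZMod 8) := {0, β, 4 * β}

def solvableResidues (ν : ZMod 8) : Finset (ZMod 8 × ZMod 8 × ZMod 8) :=
  {t | ∃ u ∈ mulSqResidues t.1, ∃ v ∈ mulSqResidues t.2.1, ∃ w ∈ mulSqResidues t.2.2,
    u + v + w = ν}

theorem eq_of_isUnit_of_mem_mulSqResidues {β u : ZMod 8} (hu : u ∈ mulSqResidues β)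
    (hunit : IsUnit u) : u = β := by
  revert β u
  simp only [isUnit_iff_exists_inv]
  decide

theorem isUnit_or_isUnit_or_isUnit_of_isUnit_add_add {u v w : ZMod 8} (h : IsUnit (u + v + w)) :
    IsUnit u ∨ IsUnit v ∨ IsUnit w := by
  revert u v w
  simp only [isUnit_iff_exists_inv]
  decide

theorem isUnit_intCast_of_odd {n : ℤ} (hn : Odd n) : IsUnit (n : ZMod 8) := by
  obtain ⟨k, rfl⟩ := hn
  push_cast
  generalize (k : ZMod 8) = κ
  revert κ
  simp only [isUnit_iff_exists_inv]
  decide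

theorem card_solvableResidues {ν : ZMod 8} (hν : IsUnit ν) : #(solvableResidues ν) = 357 := by
  revert ν
  simp only [isUnit_iff_exists_inv]
  decide +kernel

abbrev toZMod8 : ℤ_[2] →+* ZMod 8 := toZModPow 3

theorem toZMod8_mul_sq_mem_mulSqResidues (b y : ℤ_[2]) :
    toZMod8 (b * y ^ 2) ∈ mulSqResidues (toZMod8 b) := by
  rw [map_mul, map_pow]
  generalize toZMod8 b = β, toZMod8 y = η
  revert β η
  decide

theorem exists_toZMod8_mul_sq_eq {b : ℤ_[2]} {u : ZMod 8}
    (hu : u ∈ mulSqResidues (toZMod8 b)) : ∃ y, toZMod8 (b * y ^ 2) = u := by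
  simp only [mulSqResidues, mem_insert, mem_singleton] at hu
  rcases hu with rfl | rfl | rfl
  · exact ⟨0, by simp⟩
  · exact ⟨1, by simp⟩
  · exact ⟨2, by rw [map_mul, map_pow, map_ofNat]; ring⟩

theorem exists_mul_sq_eq_of_toZMod8_eq {a r : ℤ_[2]} (ha : IsUnit (toZMod8 a))
    (h : toZMod8 r = toZMod8 a) : ∃ x, a * x ^ 2 = r := by
  obtain ⟨a, rfl⟩ := isUnit_of_isUnit_toZModPow three_ne_zero ha
  have hquot : toZMod8 (↑a⁻¹ * r) = 1 := by
    rw [map_mul, h, ← map_mul, Units.inv_mul, map_one]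
  obtain ⟨x, hx⟩ := exists_sq_eq_of_toZModPow_three_eq_one hquot
  exact ⟨x, by rw [hx, Units.mul_inv_cancel_left]⟩

theorem exists_mul_sq_add_mul_sq_add_mul_sq_eq_of_isUnit {a b c m : ℤ_[2]} {v w : ZMod 8}
    (ha : IsUnit (toZMod8 a)) (hv : v ∈ mulSqResidues (toZMod8 b))
    (hw : w ∈ mulSqResidues (toZMod8 c)) (h : toZMod8 a + v + w = toZMod8 m) :
    ∃ x y z, a * x ^ 2 + b * y ^ 2 + c * z ^ 2 = m := by
  obtain ⟨y, rfl⟩ := exists_toZMod8_mul_sq_eq hv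
  obtain ⟨z, rfl⟩ := exists_toZMod8_mul_sq_eq hw
  obtain ⟨x, hx⟩ := exists_mul_sq_eq_of_toZMod8_eq ha (r := m - b * y ^ 2 - c * z ^ 2)
    (by rw [map_sub, map_sub, ← h]; ring)
  exact ⟨x, y, z, by rw [hx]; ring⟩

theorem exists_mul_sq_add_mul_sq_add_mul_sq_eq_iff {a b c m : ℤ_[2]}
    (hm : IsUnit (toZMod8 m)) :
    (∃ x y z, a * x ^ 2 + b * y ^ 2 + c * z ^ 2 = m) ↔
      (toZMod8 a, toZMod8 b, toZMod8 c) ∈ solvableResidues (toZMod8 m) := by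
  simp only [solvableResidues, mem_filter, mem_univ, true_and]
  constructor
  · rintro ⟨x, y, z, h⟩
    exact ⟨_, toZMod8_mul_sq_mem_mulSqResidues a x, _, toZMod8_mul_sq_mem_mulSqResidues b y,
      _, toZMod8_mul_sq_mem_mulSqResidues c z, by rw [← map_add, ← map_add, h]⟩
  · rintro ⟨u, hu, v, hv, w, hw, h⟩
    rcases isUnit_or_isUnit_or_isUnit_of_isUnit_add_add (h ▸ hm) with hu' | hv' | hw'
    · rw [eq_of_isUnit_of_mem_mulSqResidues hu hu'] at h hu'
      exact exists_mul_sq_add_mul_sq_add_mul_sq_eq_of_isUnit hu' hv hw h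
    · rw [eq_of_isUnit_of_mem_mulSqResidues hv hv'] at h hv'
      obtain ⟨y, x, z, hs⟩ :=
        exists_mul_sq_add_mul_sq_add_mul_sq_eq_of_isUnit hv' hu hw (by rw [← h]; ring)
      exact ⟨x, y, z, by rw [← hs]; ring⟩
    · rw [eq_of_isUnit_of_mem_mulSqResidues hw hw'] at h hw'
      obtain ⟨z, x, y, hs⟩ :=
        exists_mul_sq_add_mul_sq_add_mul_sq_eq_of_isUnit hw' hu hv (by rw [← h]; ring)
      exact ⟨x, y, z, by rw [← hs]; ring⟩

def toZMod8Triple : ℤ_[2] × ℤ_[2] × ℤ_[2] →+* ZMod 8 × ZMod 8 × ZMod 8 :=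
  toZMod8.prodMap (toZMod8.prodMap toZMod8)

theorem toZMod8Triple_surjective : Function.Surjective toZMod8Triple :=
  (ZMod.ringHom_surjective toZMod8).prodMap
    ((ZMod.ringHom_surjective toZMod8).prodMap (ZMod.ringHom_surjective toZMod8))

theorem measurableSet_ker_toZMod8Triple :
    MeasurableSet (toZMod8Triple.toAddMonoidHom.ker : Set (ℤ_[2] × ℤ_[2] × ℤ_[2])) := by
  have hK := isClosed_ker_toZModPow (p := 2) 3
  have : (toZMod8Triple.toAddMonoidHom.ker : Set (ℤ_[2] × ℤ_[2] × ℤ_[2])) =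
      (RingHom.ker toZMod8 : Set ℤ_[2]) ×ˢ (RingHom.ker toZMod8 : Set ℤ_[2]) ×ˢ
        (RingHom.ker toZMod8 : Set ℤ_[2]) := by
    ext
    simp [toZMod8Triple, Prod.ext_iff]
  exact this ▸ (hK.prod (hK.prod hK)).measurableSet

theorem omega_two_eq_preimage {n : ℤ} (hn : IsUnit (n : ZMod 8)) :
    Omega 2 n = toZMod8Triple ⁻¹' solvableResidues (n : ZMod 8) := by
  ext ⟨a, b, c⟩
  rw [← map_intCast toZMod8 n] at hn ⊢
  exact exists_mul_sq_add_mul_sq_add_mul_sq_eq_iff hn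

end PadicInt

open Finset PadicInt in
/-- For odd `n`, the local density `σ_2 = μ_2(Ω_2)` equals `357/512`. -/
theorem stmt2 (n : ℤ) (hn : Odd n) :
    (padicHaar 2 (Omega 2 n)).toReal = 357 / 512 := by
  have hunit := isUnit_intCast_of_odd hn
  have hcount : Nat.card (ZMod 8 × ZMod 8 × ZMod 8) * padicHaar 2 (Omega 2 n) =
      #(solvableResidues (n : ZMod 8)) * padicHaar 2 Set.univ := by
    rw [omega_two_eq_preimage hunit]
    exact toZMod8Triple.toAddMonoidHom.card_mul_measure_preimage (padicHaar 2)
      toZMod8Triple_surjective measurableSet_ker_toZMod8Triple _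
  rw [card_solvableResidues hunit, padicHaar_univ, Nat.card_eq_fintype_card] at hcount
  simp only [Fintype.card_prod, ZMod.card] at hcount
  rw [← ENNReal.eq_div_iff (by norm_num) (by norm_num)] at hcount
  rw [hcount, ENNReal.toReal_div]
  norm_num
end
end

section
/- Let $n$ be a nonzero integer and let $p$ be a prime. Then the set $\Omega_p = \{(a,b,c) \in \mathbb{Z}_p^3 : \exists (x,y,z) \in \mathbb{Z}_p^3,\ a x^2 + b y^2 + c z^2 = n\}$ is both open and closed in $\mathbb{Z}_p^3$ (with the $p$-adic topology); in particular its topological boundary is empty and has Haar measure zero. -/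
/-!
If `a x² + b y² + c z² = n ≠ 0`, the ultrametric inequality forces one term, say `a x²`, to have
norm at least `‖n‖`. Move `(a, b, c)` by less than `δ = ‖2‖² ‖n‖²` and keep `y, z` fixed: Hensel's
lemma applied to `a' X² - (n - b' y² - c' z²)` at `X = x` still gives a root, because the
derivative `2 a' x` has norm at least `‖2‖ ‖n‖`. So membership in `Ω_p` is constant on balls of
radius `δ`, and `Ω_p` is clopen.
-/

open MeasureTheory TopologicalSpace Filter

noncomputable section

theorem Metric.isClopen_of_forall_dist_lt {α : Type*} [PseudoMetricSpace α] {s : Set α}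
    {δ : ℝ} (hδ : 0 < δ) (hs : ∀ x y, dist x y < δ → x ∈ s → y ∈ s) : IsClopen s := by
  refine ⟨?_, ?_⟩
  · rw [← isOpen_compl_iff, Metric.isOpen_iff]
    exact fun x hx => ⟨δ, hδ, fun y hy hys => hx (hs y x hy hys)⟩
  · rw [Metric.isOpen_iff]
    exact fun x hx => ⟨δ, hδ, fun y hy => hs x y (by rwa [dist_comm]) hx⟩

namespace PadicInt

variable {p : ℕ} [Fact p.Prime]

theorem norm_mul_le_left (a x : ℤ_[p]) : ‖a * x‖ ≤ ‖a‖ := by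
  rw [norm_mul]
  exact mul_le_of_le_one_right (norm_nonneg a) (norm_le_one x)

open Polynomial in
theorem exists_mul_sq_eq_of_norm_sub_lt {a x s : ℤ_[p]}
    (h : ‖a * x ^ 2 - s‖ < ‖2 * a * x‖ ^ 2) : ∃ z, a * z ^ 2 = s := by
  set F : ℤ_[p][X] := C a * X ^ 2 - C s
  have hFx : F.aeval x = a * x ^ 2 - s := by simp [F]
  have hF'x : F.derivative.aeval x = 2 * a * x := by
    simp only [F, derivative_sub, derivative_C_mul_X_pow, derivative_C, sub_zero,
      coe_aeval_eq_eval, eval_mul, eval_C, eval_pow, eval_X]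
    ring
  obtain ⟨z, hz, -⟩ := hensels_lemma (F := F) (a := x) (by rwa [hFx, hF'x])
  exact ⟨z, by simpa [F, sub_eq_zero] using hz⟩

theorem exists_mul_sq_add_eq_of_norm_le {a a' x r r' m : ℤ_[p]} (hm : a * x ^ 2 + r = m)
    (hdom : ‖m‖ ≤ ‖a * x ^ 2‖) (ha : ‖a' - a‖ < ‖(2 : ℤ_[p])‖ ^ 2 * ‖m‖ ^ 2)
    (hr : ‖r' - r‖ < ‖(2 : ℤ_[p])‖ ^ 2 * ‖m‖ ^ 2) : ∃ x', a' * x' ^ 2 + r' = m := by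
  have hδm : ‖(2 : ℤ_[p])‖ ^ 2 * ‖m‖ ^ 2 ≤ ‖m‖ := by
    have h2 : ‖(2 : ℤ_[p])‖ ^ 2 ≤ 1 := pow_le_one₀ (norm_nonneg _) (norm_le_one _)
    have hm2 : ‖m‖ ^ 2 ≤ ‖m‖ := pow_le_of_le_one (norm_nonneg _) (norm_le_one _) two_ne_zero
    nlinarith [norm_nonneg m]
  have hax : ‖m‖ ≤ ‖a * x‖ :=
    hdom.trans (by rw [pow_two, ← mul_assoc]; exact norm_mul_le_left _ _)
  have ha'x : ‖m‖ ≤ ‖a' * x‖ := by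
    have herr : ‖(a - a') * x‖ < ‖a * x‖ :=
      ((norm_mul_le_left _ _).trans_lt (by rwa [norm_sub_rev])).trans_le (hδm.trans hax)
    have hsum := IsUltrametricDist.norm_add_le_max (a' * x) ((a - a') * x)
    rw [← add_mul, add_sub_cancel] at hsum
    exact hax.trans ((le_max_iff.mp hsum).resolve_right herr.not_ge)
  have hsolve : ‖a' * x ^ 2 - (m - r')‖ < ‖2 * a' * x‖ ^ 2 :=
    calc ‖a' * x ^ 2 - (m - r')‖ = ‖(a' - a) * x ^ 2 + (r' - r)‖ := by rw [← hm]; ring_nf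
      _ ≤ max ‖(a' - a) * x ^ 2‖ ‖r' - r‖ := IsUltrametricDist.norm_add_le_max _ _
      _ < ‖(2 : ℤ_[p])‖ ^ 2 * ‖m‖ ^ 2 := max_lt ((norm_mul_le_left _ _).trans_lt ha) hr
      _ ≤ ‖2 * a' * x‖ ^ 2 := by rw [mul_assoc, norm_mul, mul_pow]; gcongr
  obtain ⟨z, hz⟩ := exists_mul_sq_eq_of_norm_sub_lt hsolve
  exact ⟨z, by rw [hz]; ring⟩

theorem norm_mul_sq_add_mul_sq_sub_lt {δ : ℝ} {a a' b b' : ℤ_[p]} (x y : ℤ_[p])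
    (ha : ‖a' - a‖ < δ) (hb : ‖b' - b‖ < δ) :
    ‖(a' * x ^ 2 + b' * y ^ 2) - (a * x ^ 2 + b * y ^ 2)‖ < δ :=
  calc ‖(a' * x ^ 2 + b' * y ^ 2) - (a * x ^ 2 + b * y ^ 2)‖
      = ‖(a' - a) * x ^ 2 + (b' - b) * y ^ 2‖ := by ring_nf
    _ ≤ max ‖(a' - a) * x ^ 2‖ ‖(b' - b) * y ^ 2‖ := IsUltrametricDist.norm_add_le_max _ _
    _ < δ := max_lt ((norm_mul_le_left _ _).trans_lt ha) ((norm_mul_le_left _ _).trans_lt hb)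

end PadicInt

open PadicInt in
theorem mem_Omega_of_dist_lt {p : ℕ} [Fact p.Prime] {n : ℤ} {t t' : ℤ_[p] × ℤ_[p] × ℤ_[p]}
    (ht : t ∈ Omega p n) (h : dist t t' < ‖(2 : ℤ_[p])‖ ^ 2 * ‖(n : ℤ_[p])‖ ^ 2) :
    t' ∈ Omega p n := by
  obtain ⟨a, b, c⟩ := t
  obtain ⟨a', b', c'⟩ := t'
  obtain ⟨x, y, z, hxyz : a * x ^ 2 + b * y ^ 2 + c * z ^ 2 = n⟩ := ht
  rw [dist_comm, Prod.dist_eq, Prod.dist_eq] at h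
  simp only [max_lt_iff, dist_eq_norm] at h
  obtain ⟨ha, hb, hc⟩ := h
  have hdom : ‖(n : ℤ_[p])‖ ≤ max ‖a * x ^ 2‖ (max ‖b * y ^ 2‖ ‖c * z ^ 2‖) := by
    rw [← hxyz, add_assoc]
    exact (IsUltrametricDist.norm_add_le_max _ _).trans
      (max_le_max le_rfl (IsUltrametricDist.norm_add_le_max _ _))
  rcases le_max_iff.mp hdom with hx | hyz
  · obtain ⟨x', hx'⟩ := exists_mul_sq_add_eq_of_norm_le (by rw [← hxyz]; ring) hx ha
      (norm_mul_sq_add_mul_sq_sub_lt y z hb hc)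
    exact ⟨x', y, z, by linear_combination hx'⟩
  rcases le_max_iff.mp hyz with hy | hz
  · obtain ⟨y', hy'⟩ := exists_mul_sq_add_eq_of_norm_le (by rw [← hxyz]; ring) hy hb
      (norm_mul_sq_add_mul_sq_sub_lt x z ha hc)
    exact ⟨x, y', z, by linear_combination hy'⟩
  · obtain ⟨z', hz'⟩ := exists_mul_sq_add_eq_of_norm_le (by rw [← hxyz]; ring) hz hc
      (norm_mul_sq_add_mul_sq_sub_lt x y ha hb)
    exact ⟨x, y, z', by linear_combination hz'⟩

/-- For every nonzero integer `n` and every prime `p`, the set `Ω_p` is clopen in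
`ℤ_p³`; in particular its topological boundary is empty and has Haar measure zero. -/
theorem stmt4 (n : ℤ) (hn : n ≠ 0) (p : ℕ) [Fact p.Prime] :
    IsOpen (Omega p n) ∧ IsClosed (Omega p n) ∧
    frontier (Omega p n) = ∅ ∧ padicHaar p (frontier (Omega p n)) = 0 := by
  have hδ : 0 < ‖(2 : ℤ_[p])‖ ^ 2 * ‖(n : ℤ_[p])‖ ^ 2 := by
    have h2 : (2 : ℤ_[p]) ≠ 0 := two_ne_zero
    have hn' : (n : ℤ_[p]) ≠ 0 := Int.cast_ne_zero.mpr hn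
    positivity
  have hclopen : IsClopen (Omega p n) :=
    Metric.isClopen_of_forall_dist_lt hδ fun _ _ h ht => mem_Omega_of_dist_lt ht h
  have hfrontier : frontier (Omega p n) = ∅ := hclopen.frontier_eq
  exact ⟨hclopen.isOpen, hclopen.isClosed, hfrontier, by rw [hfrontier, measure_empty]⟩
end
end
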